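/- arXiv:2602.18380 — 2 statements merged into one kernel-verified Lean document; each statement's English description precedes it below -/
import Mathlib

section
/- Let (A,B) and (A′,B′) be as in the type-one single column simulation with 4 ≤ K ≤ 8, let 0 ≤ ε < 1/(240·n²), let (x*,y*) be an ε-WSNE of (A′,B′), and assume the renormalizations defining the translated profile (x,y) are valid (the vectors x′ and y′ have positive sums). Then |(A·y)_i − (A·y)_{i′}| ≤ 3950·n²·ε for all rows i, i′ of A with x_i > 0 and x_{i′} > 0 (3950·n²·ε is an explicit form of the paper's O(n²·ε) bound). -/
open Finset
open scoped Classical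

/-- `(x, y)` is an `ε`-well-supported Nash equilibrium of the bimatrix game with
`nr` rows, `nc` columns and payoff matrices `A` (row player) and `B` (column player). -/
def IsWSNE (nr nc : ℕ) (A B : ℕ → ℕ → ℝ) (x y : ℕ → ℝ) (ε : ℝ) : Prop :=
  (∀ i, 0 ≤ x i) ∧ (∀ i, nr ≤ i → x i = 0) ∧ (∑ i ∈ range nr, x i = 1) ∧
  (∀ j, 0 ≤ y j) ∧ (∀ j, nc ≤ j → y j = 0) ∧ (∑ j ∈ range nc, y j = 1) ∧
  (∀ i < nr, 0 < x i → ∀ i' < nr,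
    ∑ j ∈ range nc, A i j * y j ≥ ∑ j ∈ range nc, A i' j * y j - ε) ∧
  (∀ j < nc, 0 < y j → ∀ j' < nc,
    ∑ i ∈ range nr, x i * B i j ≥ ∑ i ∈ range nr, x i * B i j' - ε)

/-- Input assumptions of the type-one single column simulation: `(A,B)` has at most
`n` rows and columns (`nr` rows, `nc` columns), all entries in `[0,K]`, every row
and column of `A` and `B` has an entry `≥ 1`, the columns of `A` containing `K` are
exactly the columns `j < k`, each such column contains exactly one `K`, its other
non-zero entries lie in `{1,2}` and are either at most two values from `{1,2}` or
at most three `1`s. -/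
def Scs1Input (n nr nc k : ℕ) (K : ℝ) (A B : ℕ → ℕ → ℝ) : Prop :=
  nr ≤ n ∧ nc ≤ n ∧ k ≤ nc ∧
  (∀ i < nr, ∀ j < nc, 0 ≤ A i j ∧ A i j ≤ K) ∧
  (∀ i < nr, ∀ j < nc, 0 ≤ B i j ∧ B i j ≤ K) ∧
  (∀ i < nr, ∃ j < nc, 1 ≤ A i j) ∧ (∀ j < nc, ∃ i < nr, 1 ≤ A i j) ∧
  (∀ i < nr, ∃ j < nc, 1 ≤ B i j) ∧ (∀ j < nc, ∃ i < nr, 1 ≤ B i j) ∧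
  (∀ j < k,
    ((range nr).filter fun i => A i j = K).card = 1 ∧
    (∀ i < nr, A i j = 0 ∨ A i j = 1 ∨ A i j = 2 ∨ A i j = K) ∧
    (((range nr).filter fun i => A i j = 1 ∨ A i j = 2).card ≤ 2 ∨
      (((range nr).filter fun i => A i j = 1).card ≤ 3 ∧ ∀ i < nr, A i j ≠ 2))) ∧
  (∀ j, k ≤ j → j < nc → ∀ i < nr, A i j ≠ K)

/-- The row player's payoff matrix `A'` of the type-one single column simulation.
It has `2k + nr` rows and `2k + nc` columns.  For each `j < k`: the block
`(rbʲ, cb₁ʲ) = ({2j,2j+1}, {3j,3j+1})` equals `S = [[2,0],[0,1]]`, the block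
`(rbʲ, cb₂ʲ) = ({2j,2j+1}, {3j+2})` is all ones, and the block `(rb_e, cb₁ʲ)`
equals `encode(A_j)` (each `1` of column `A_j` kept as a `1` in the first column,
each `2` replaced by a `1` in the second column, the `K` replaced by `K/2` in the
second column).  Columns `c ≥ 3k` restricted to `rb_e` equal the columns
`A_{k}, …, A_{nc-1}`; all other entries are `0`. -/
noncomputable def scs1A (k : ℕ) (K : ℝ) (A : ℕ → ℕ → ℝ) : ℕ → ℕ → ℝ := fun r c =>
  if r < 2*k then
    if c = 3*(r/2) then (if r % 2 = 0 then 2 else 0)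
    else if c = 3*(r/2) + 1 then (if r % 2 = 0 then 0 else 1)
    else if c = 3*(r/2) + 2 then 1
    else 0
  else
    if c < 3*k then
      (if c % 3 = 0 then (if A (r - 2*k) (c/3) = 1 then 1 else 0)
       else if c % 3 = 1 then
         (if A (r - 2*k) (c/3) = K then K/2
          else if A (r - 2*k) (c/3) = 2 then 1 else 0)
       else 0)
    else A (r - 2*k) (c - 2*k)

/-- The column player's payoff matrix `B'` of the type-one single column
simulation: for `j < k` the block `(rbʲ, cb₁ʲ)` equals `T = [[0,1],[1,0]]` and the
block `(rb_e, cb₂ʲ)` equals column `B_j`; columns `c ≥ 3k` restricted to `rb_e`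
equal the columns `B_k, …, B_{nc-1}`; all other entries are `0`. -/
noncomputable def scs1B (k : ℕ) (B : ℕ → ℕ → ℝ) : ℕ → ℕ → ℝ := fun r c =>
  if r < 2*k then
    if c = 3*(r/2) then (if r % 2 = 0 then 0 else 1)
    else if c = 3*(r/2) + 1 then (if r % 2 = 0 then 1 else 0)
    else 0
  else
    if c < 3*k then (if c % 3 = 2 then B (r - 2*k) (c/3) else 0)
    else B (r - 2*k) (c - 2*k)

/-- The (un-normalized) translated column strategy `y'`: for `j < k`,
`y'_j = y*_{3j}` if `P(cb₁ʲ) ≥ 11ε` and `0` otherwise; for `j ≥ k`,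
`y'_j = y*_{3k + (j-k)}`. -/
noncomputable def scs1Y (k : ℕ) (ε : ℝ) (ystar : ℕ → ℝ) : ℕ → ℝ := fun j =>
  if j < k then (if 11 * ε ≤ ystar (3*j) + ystar (3*j+1) then ystar (3*j) else 0)
  else ystar (2*k + j)


/-!
Some column of `B′` pays more than `ε` (otherwise the row mass `1 = ∑ x*` would be at most
`(2k + nc) ε`), so every column played by `y*` pays a positive amount. In the gadget of column
`j`, column `3j` pays `x*_{2j+1}` and column `3j+1` pays `x*_{2j}`; so whenever one of them is
played, the gadget row paying for it is played and is an `ε`-best response, and comparing rows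
`2j` and `2j+1` gives `|2 y*_{3j} - y*_{3j+1}| ≤ ε`. Consequently the encoding row `2k+i` earns
`(A y')_i` up to `31 ε` per column `j < k`, and supported encoding rows earn within `ε` of each
other, so `|(A y')_i - (A y')_{i'}| = O(n ε)`.

It remains to bound the mass `∑ y'` from below by `Ω(1/n)`. The mass on the columns `cb₂ʲ` is at
most `k` times the payoff of a supported encoding row, which is at most `8` times the remaining
mass, and the remaining mass is at most `3 ∑ y' + 11 k ε`. Dividing by `∑ y'` gives `O(n² ε)`.
-/

lemma sum_range_three_mul {M : Type*} [AddCommMonoid M] (k : ℕ) (f : ℕ → M) :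
    ∑ c ∈ range (3 * k), f c = ∑ j ∈ range k, (f (3 * j) + f (3 * j + 1) + f (3 * j + 2)) := by
  induction k with
  | zero => simp
  | succ k ih =>
    rw [show 3 * (k + 1) = 3 * k + 1 + 1 + 1 by ring, sum_range_succ, sum_range_succ,
      sum_range_succ, ih, sum_range_succ]
    abel

lemma sum_range_two_mul_add {M : Type*} [AddCommMonoid M] {k nc : ℕ} (hk : k ≤ nc)
    (f : ℕ → M) : ∑ c ∈ range (2 * k + nc), f c
      = ∑ j ∈ range k, (f (3 * j) + f (3 * j + 1) + f (3 * j + 2))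
        + ∑ j ∈ Ico k nc, f (2 * k + j) := by
  rw [← sum_range_add_sum_Ico _ (show 3 * k ≤ 2 * k + nc by omega), sum_range_three_mul,
    sum_Ico_add, show k + 2 * k = 3 * k by ring, add_comm nc]

def rowPayoff (nc : ℕ) (A : ℕ → ℕ → ℝ) (y : ℕ → ℝ) (i : ℕ) : ℝ :=
  ∑ j ∈ range nc, A i j * y j

def colPayoff (nr : ℕ) (B : ℕ → ℕ → ℝ) (x : ℕ → ℝ) (j : ℕ) : ℝ :=
  ∑ i ∈ range nr, x i * B i j

namespace IsWSNE

variable {nr nc : ℕ} {A B : ℕ → ℕ → ℝ} {x y : ℕ → ℝ} {ε : ℝ}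

lemma rowStrategy_nonneg (h : IsWSNE nr nc A B x y ε) (i : ℕ) : 0 ≤ x i := h.1 i

lemma colStrategy_nonneg (h : IsWSNE nr nc A B x y ε) (j : ℕ) : 0 ≤ y j := h.2.2.2.1 j

lemma sum_rowStrategy (h : IsWSNE nr nc A B x y ε) : ∑ i ∈ range nr, x i = 1 := h.2.2.1

lemma sum_colStrategy (h : IsWSNE nr nc A B x y ε) : ∑ j ∈ range nc, y j = 1 := h.2.2.2.2.2.1

lemma rowPayoff_le (h : IsWSNE nr nc A B x y ε) {i i' : ℕ} (hi : i < nr) (hxi : 0 < x i)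
    (hi' : i' < nr) : rowPayoff nc A y i' ≤ rowPayoff nc A y i + ε := by
  have := h.2.2.2.2.2.2.1 i hi hxi i' hi'
  rw [rowPayoff, rowPayoff]
  linarith

lemma colPayoff_le (h : IsWSNE nr nc A B x y ε) {j j' : ℕ} (hj : j < nc) (hyj : 0 < y j)
    (hj' : j' < nc) : colPayoff nr B x j' ≤ colPayoff nr B x j + ε := by
  have := h.2.2.2.2.2.2.2 j hj hyj j' hj'
  rw [colPayoff, colPayoff]
  linarith

lemma eps_nonneg (h : IsWSNE nr nc A B x y ε) : 0 ≤ ε := by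
  obtain ⟨i, hi, hxi⟩ : ∃ i ∈ range nr, 0 < x i :=
    exists_lt_of_sum_lt
      (by simp [h.sum_rowStrategy] : ∑ i ∈ range nr, (0 : ℝ) < ∑ i ∈ range nr, x i)
  linarith [h.rowPayoff_le (mem_range.1 hi) hxi (mem_range.1 hi)]

lemma abs_rowPayoff_sub_le (h : IsWSNE nr nc A B x y ε) {i i' : ℕ} (hi : i < nr)
    (hxi : 0 < x i) (hi' : i' < nr) (hxi' : 0 < x i') :
    |rowPayoff nc A y i - rowPayoff nc A y i'| ≤ ε :=
  abs_sub_le_iff.2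
    ⟨by linarith [h.rowPayoff_le hi' hxi' hi], by linarith [h.rowPayoff_le hi hxi hi']⟩

lemma colPayoff_pos (h : IsWSNE nr nc A B x y ε) {j j' : ℕ} (hj : j < nc) (hyj : 0 < y j)
    (hj' : j' < nc) (hgt : ε < colPayoff nr B x j') : 0 < colPayoff nr B x j := by
  linarith [h.colPayoff_le hj hyj hj']

lemma exists_lt_colPayoff (h : IsWSNE nr nc A B x y ε)
    (hB : ∀ i < nr, ∀ j < nc, 0 ≤ B i j) (hBrow : ∀ i < nr, ∃ j < nc, 1 ≤ B i j)
    (hε : nc * ε < 1) : ∃ j < nc, ε < colPayoff nr B x j := by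
  by_contra! hsmall
  have hrow : ∀ i ∈ range nr, x i ≤ ∑ j ∈ range nc, x i * B i j := by
    intro i hi
    obtain ⟨j, hj, hBij⟩ := hBrow i (mem_range.1 hi)
    calc x i ≤ x i * B i j := le_mul_of_one_le_right (h.rowStrategy_nonneg i) hBij
      _ ≤ ∑ j ∈ range nc, x i * B i j :=
        single_le_sum (fun j hj => mul_nonneg (h.rowStrategy_nonneg i) (hB i (mem_range.1 hi) j
          (mem_range.1 hj))) (mem_range.2 hj)
  have := calc (1 : ℝ) = ∑ i ∈ range nr, x i := h.sum_rowStrategy.symm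
    _ ≤ ∑ i ∈ range nr, ∑ j ∈ range nc, x i * B i j := sum_le_sum hrow
    _ = ∑ j ∈ range nc, colPayoff nr B x j := sum_comm
    _ ≤ ∑ _j ∈ range nc, ε := sum_le_sum fun j hj => hsmall j (mem_range.1 hj)
    _ = nc * ε := by rw [sum_const, card_range, nsmul_eq_mul]
  linarith

end IsWSNE

-- The entries of `encode(A_j)` in its first and second column, given the entry `a` of `A_j`.
noncomputable def encodeFirst (a : ℝ) : ℝ := if a = 1 then 1 else 0

noncomputable def encodeSecond (K a : ℝ) : ℝ := if a = K then K / 2 else if a = 2 then 1 else 0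

section Simulation

variable {nr nc k : ℕ} {K : ℝ} {A B : ℕ → ℕ → ℝ}

lemma scs1B_nonneg (hB : ∀ i < nr, ∀ j < nc, 0 ≤ B i j) (hk : k ≤ nc) :
    ∀ r < 2 * k + nr, ∀ c < 2 * k + nc, 0 ≤ scs1B k B r c := by
  intro r hr c hc
  unfold scs1B
  split_ifs <;> first | exact hB _ (by omega) _ (by omega) | norm_num

lemma scs1B_exists_one_le (hBrow : ∀ i < nr, ∃ j < nc, 1 ≤ B i j) (hk : k ≤ nc) :
    ∀ r < 2 * k + nr, ∃ c < 2 * k + nc, 1 ≤ scs1B k B r c := by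
  intro r hr
  by_cases hrk : r < 2 * k
  · rcases Nat.even_or_odd r with ⟨m, rfl⟩ | ⟨m, rfl⟩
    · refine ⟨3 * m + 1, by omega, ?_⟩
      simp only [scs1B, if_pos hrk]
      rw [if_neg (by omega), if_pos (by omega), if_pos (by omega)]
    · refine ⟨3 * m, by omega, ?_⟩
      simp only [scs1B, if_pos hrk]
      rw [if_pos (by omega), if_neg (by omega)]
  · obtain ⟨j, hj, hBj⟩ := hBrow (r - 2 * k) (by omega)
    by_cases hjk : j < k
    · refine ⟨3 * j + 2, by omega, ?_⟩
      simp only [scs1B, if_neg hrk]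
      rwa [if_pos (by omega), if_pos (by omega), show (3 * j + 2) / 3 = j by omega]
    · refine ⟨2 * k + j, by omega, ?_⟩
      simp only [scs1B, if_neg hrk]
      rwa [if_neg (by omega), show 2 * k + j - 2 * k = j by omega]

lemma colPayoff_scs1B_three_mul (x : ℕ → ℝ) {j : ℕ} (hj : j < k) :
    colPayoff (2 * k + nr) (scs1B k B) x (3 * j) = x (2 * j + 1) := by
  rw [colPayoff, sum_eq_single_of_mem (2 * j + 1) (mem_range.2 (by omega))]
  · simp only [scs1B]
    rw [if_pos (by omega), if_pos (by omega), if_neg (by omega), mul_one]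
  · intro r _ hr
    simp only [scs1B]
    split_ifs <;> first | omega | simp

lemma colPayoff_scs1B_three_mul_add_one (x : ℕ → ℝ) {j : ℕ} (hj : j < k) :
    colPayoff (2 * k + nr) (scs1B k B) x (3 * j + 1) = x (2 * j) := by
  rw [colPayoff, sum_eq_single_of_mem (2 * j) (mem_range.2 (by omega))]
  · simp only [scs1B]
    rw [if_pos (by omega), if_neg (by omega), if_pos (by omega), if_pos (by omega), mul_one]
  · intro r _ hr
    simp only [scs1B]
    split_ifs <;> first | omega | simp

lemma rowPayoff_scs1A_two_mul (hk : k ≤ nc) (y : ℕ → ℝ) {j : ℕ} (hj : j < k) :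
    rowPayoff (2 * k + nc) (scs1A k K A) y (2 * j) = 2 * y (3 * j) + y (3 * j + 2) := by
  have hterm : ∀ c ∈ range (2 * k + nc), scs1A k K A (2 * j) c * y c
      = (if c = 3 * j then 2 * y c else 0) + (if c = 3 * j + 2 then y c else 0) := by
    intro c _
    simp only [scs1A, if_pos (show 2 * j < 2 * k by omega), show 2 * j / 2 = j by omega,
      show 2 * j % 2 = 0 by omega]
    split_ifs <;> first | ring1 | omega
  rw [rowPayoff, sum_congr rfl hterm, sum_add_distrib, sum_ite_eq', sum_ite_eq',
    if_pos (mem_range.2 (by omega)), if_pos (mem_range.2 (by omega))]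

lemma rowPayoff_scs1A_two_mul_add_one (hk : k ≤ nc) (y : ℕ → ℝ) {j : ℕ} (hj : j < k) :
    rowPayoff (2 * k + nc) (scs1A k K A) y (2 * j + 1) = y (3 * j + 1) + y (3 * j + 2) := by
  have hterm : ∀ c ∈ range (2 * k + nc), scs1A k K A (2 * j + 1) c * y c
      = (if c = 3 * j + 1 then y c else 0) + (if c = 3 * j + 2 then y c else 0) := by
    intro c _
    simp only [scs1A, if_pos (show 2 * j + 1 < 2 * k by omega),
      show (2 * j + 1) / 2 = j by omega, show (2 * j + 1) % 2 = 1 by omega,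
      Nat.one_ne_zero, if_false]
    split_ifs <;> first | ring1 | omega
  rw [rowPayoff, sum_congr rfl hterm, sum_add_distrib, sum_ite_eq', sum_ite_eq',
    if_pos (mem_range.2 (by omega)), if_pos (mem_range.2 (by omega))]

lemma rowPayoff_scs1A_encoding (hk : k ≤ nc) (y : ℕ → ℝ) (i : ℕ) :
    rowPayoff (2 * k + nc) (scs1A k K A) y (2 * k + i)
      = ∑ j ∈ range k, (encodeFirst (A i j) * y (3 * j) + encodeSecond K (A i j) * y (3 * j + 1))
        + ∑ j ∈ Ico k nc, A i j * y (2 * k + j) := by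
  rw [rowPayoff, sum_range_two_mul_add hk]
  have hi : ¬2 * k + i < 2 * k := by omega
  congr 1
  · refine sum_congr rfl fun j hj => ?_
    have hj := mem_range.1 hj
    simp [scs1A, hi, hj, show 3 * j + 1 < 3 * k by omega, show 3 * j + 2 < 3 * k by omega,
      show 3 * j % 3 = 0 by omega, show (3 * j + 1) % 3 = 1 by omega,
      show (3 * j + 2) % 3 = 2 by omega, show 3 * j / 3 = j by omega,
      show (3 * j + 1) / 3 = j by omega, encodeFirst, encodeSecond]
  · refine sum_congr rfl fun j hj => ?_
    have hj := mem_Ico.1 hj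
    simp only [scs1A, if_neg hi, if_neg (show ¬2 * k + j < 3 * k by omega),
      Nat.add_sub_cancel_left]

end Simulation

lemma encodeFirst_le_one (a : ℝ) : encodeFirst a ≤ 1 := by
  unfold encodeFirst
  split_ifs <;> norm_num

lemma encodeSecond_le_four {K : ℝ} (hK : K ≤ 8) (a : ℝ) : encodeSecond K a ≤ 4 := by
  unfold encodeSecond
  split_ifs <;> linarith

lemma add_le_three_mul_ite {p q ε : ℝ} (hε : 0 ≤ ε) (hqp : q ≤ 2 * p + ε) :
    p + q ≤ 3 * (if 11 * ε ≤ p + q then p else 0) + 11 * ε := by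
  split_ifs <;> linarith

-- The worst case is `a = K` below the threshold, where `3 q < 23 ε` and the error is `K q / 2`.
lemma abs_mul_ite_sub_encode_le {K ε a p q : ℝ} (hK4 : 4 ≤ K) (hK8 : K ≤ 8)
    (ha : a = 0 ∨ a = 1 ∨ a = 2 ∨ a = K) (hp : 0 ≤ p) (hq : 0 ≤ q)
    (hqp : q ≤ 2 * p + ε) (hpq : 2 * p ≤ q + ε) :
    |a * (if 11 * ε ≤ p + q then p else 0) - (encodeFirst a * p + encodeSecond K a * q)|
      ≤ 31 * ε := by
  have hK1 : K ≠ 1 := by linarith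
  have hK2 : K ≠ 2 := by linarith
  rcases ha with rfl | rfl | rfl | rfl <;>
    simp only [encodeFirst, encodeSecond, hK1.symm, hK2.symm, hK1, hK2, if_true, if_false] <;>
    split_ifs with h <;> rw [abs_le] <;> constructor <;> nlinarith

-- The probability that `y*` places outside the columns `cb₂ʲ`.
def scs1Mass (k nc : ℕ) (y : ℕ → ℝ) : ℝ :=
  ∑ j ∈ range k, (y (3 * j) + y (3 * j + 1)) + ∑ j ∈ Ico k nc, y (2 * k + j)

section Equilibrium

variable {nr nc k : ℕ} {K ε : ℝ} {A B : ℕ → ℕ → ℝ} {x y : ℕ → ℝ}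

lemma sum_mul_scs1Y (hk : k ≤ nc) (f : ℕ → ℝ) :
    ∑ j ∈ range nc, f j * scs1Y k ε y j
      = ∑ j ∈ range k, f j * scs1Y k ε y j + ∑ j ∈ Ico k nc, f j * y (2 * k + j) := by
  rw [← sum_range_add_sum_Ico _ hk]
  congr 1
  refine sum_congr rfl fun j hj => ?_
  rw [scs1Y, if_neg (by simp only [mem_Ico] at hj; omega)]

lemma scs1Y_nonneg (hy : ∀ j, 0 ≤ y j) (j : ℕ) : 0 ≤ scs1Y k ε y j := by
  unfold scs1Y
  split_ifs <;> first | exact hy _ | exact le_rfl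

lemma scs1_gadget_balanced (h : IsWSNE (2 * k + nr) (2 * k + nc) (scs1A k K A) (scs1B k B) x y ε)
    (hk : k ≤ nc) (hgt : ∃ c < 2 * k + nc, ε < colPayoff (2 * k + nr) (scs1B k B) x c)
    {j : ℕ} (hj : j < k) :
    y (3 * j + 1) ≤ 2 * y (3 * j) + ε ∧ 2 * y (3 * j) ≤ y (3 * j + 1) + ε := by
  obtain ⟨c, hc, hεc⟩ := hgt
  have hrow_top := rowPayoff_scs1A_two_mul (K := K) (A := A) hk y hj
  have hrow_bot := rowPayoff_scs1A_two_mul_add_one (K := K) (A := A) hk y hj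
  constructor
  · rcases (h.colStrategy_nonneg (3 * j + 1)).eq_or_lt with hzero | hpos
    · linarith [h.colStrategy_nonneg (3 * j), h.eps_nonneg]
    · have hx : 0 < x (2 * j) := by
        simpa only [colPayoff_scs1B_three_mul_add_one x hj] using
          h.colPayoff_pos (by omega) hpos hc hεc
      linarith [h.rowPayoff_le (i := 2 * j) (by omega) hx (i' := 2 * j + 1) (by omega)]
  · rcases (h.colStrategy_nonneg (3 * j)).eq_or_lt with hzero | hpos
    · linarith [h.colStrategy_nonneg (3 * j + 1), h.eps_nonneg]
    · have hx : 0 < x (2 * j + 1) := by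
        simpa only [colPayoff_scs1B_three_mul x hj] using
          h.colPayoff_pos (by omega) hpos hc hεc
      linarith [h.rowPayoff_le (i := 2 * j + 1) (by omega) hx (i' := 2 * j) (by omega)]

lemma one_le_scs1Mass (h : IsWSNE (2 * k + nr) (2 * k + nc) (scs1A k K A) (scs1B k B) x y ε)
    (hk : k ≤ nc) (hK8 : K ≤ 8) {i : ℕ} (hi : i < nr) (hA : ∀ j < nc, A i j ≤ K)
    (hxi : 0 < x (2 * k + i)) : 1 ≤ (1 + 8 * k) * scs1Mass k nc y + k * ε := by
  have hW : rowPayoff (2 * k + nc) (scs1A k K A) y (2 * k + i) ≤ 8 * scs1Mass k nc y := by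
    rw [rowPayoff_scs1A_encoding hk, scs1Mass, mul_add, mul_sum, mul_sum]
    gcongr with j hj j hj
    · nlinarith [encodeFirst_le_one (A i j), encodeSecond_le_four hK8 (A i j),
        h.colStrategy_nonneg (3 * j), h.colStrategy_nonneg (3 * j + 1)]
    · exact h.colStrategy_nonneg _
    · exact (hA j (mem_Ico.1 hj).2).trans hK8
  -- Row `2j` earns at least `y (3j+2)`, and it cannot beat the supported row `2k+i` by `ε`.
  have hcopy : ∀ j ∈ range k,
      y (3 * j + 2) ≤ rowPayoff (2 * k + nc) (scs1A k K A) y (2 * k + i) + ε := by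
    intro j hj
    have hj := mem_range.1 hj
    have := h.rowPayoff_le (i := 2 * k + i) (by omega) hxi (i' := 2 * j) (by omega)
    rw [rowPayoff_scs1A_two_mul hk y hj] at this
    linarith [h.colStrategy_nonneg (3 * j)]
  have htotal : scs1Mass k nc y + ∑ j ∈ range k, y (3 * j + 2) = 1 := by
    rw [← h.sum_colStrategy, sum_range_two_mul_add hk, scs1Mass, sum_add_distrib, sum_add_distrib,
      sum_add_distrib]
    ring
  calc (1 : ℝ) = scs1Mass k nc y + ∑ j ∈ range k, y (3 * j + 2) := htotal.symm
    _ ≤ scs1Mass k nc y + k * (rowPayoff (2 * k + nc) (scs1A k K A) y (2 * k + i) + ε) := by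
      grw [sum_le_sum hcopy, sum_const, card_range, nsmul_eq_mul]
    _ ≤ (1 + 8 * k) * scs1Mass k nc y + k * ε := by
      nlinarith [mul_le_mul_of_nonneg_left hW (Nat.cast_nonneg k : (0 : ℝ) ≤ k)]

lemma scs1Mass_le (h : IsWSNE (2 * k + nr) (2 * k + nc) (scs1A k K A) (scs1B k B) x y ε)
    (hk : k ≤ nc) (hgt : ∃ c < 2 * k + nc, ε < colPayoff (2 * k + nr) (scs1B k B) x c) :
    scs1Mass k nc y ≤ 3 * ∑ j ∈ range nc, scs1Y k ε y j + k * (11 * ε) := by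
  have hY := sum_mul_scs1Y (y := y) (ε := ε) hk fun _ => 1
  simp only [one_mul] at hY
  have hgadget : ∀ j ∈ range k, y (3 * j) + y (3 * j + 1) ≤ 3 * scs1Y k ε y j + 11 * ε := by
    intro j hj
    have hj := mem_range.1 hj
    rw [scs1Y, if_pos hj]
    exact add_le_three_mul_ite h.eps_nonneg (scs1_gadget_balanced h hk hgt hj).1
  have htail : 0 ≤ ∑ j ∈ Ico k nc, y (2 * k + j) := sum_nonneg fun j _ => h.colStrategy_nonneg _
  calc scs1Mass k nc y
      ≤ ∑ j ∈ range k, (3 * scs1Y k ε y j + 11 * ε) + ∑ j ∈ Ico k nc, y (2 * k + j) := by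
        rw [scs1Mass]; grw [sum_le_sum hgadget]
    _ ≤ 3 * ∑ j ∈ range nc, scs1Y k ε y j + k * (11 * ε) := by
      rw [hY, sum_add_distrib, ← mul_sum, sum_const, card_range, nsmul_eq_mul]
      linarith

lemma abs_sum_mul_scs1Y_sub_rowPayoff_le
    (h : IsWSNE (2 * k + nr) (2 * k + nc) (scs1A k K A) (scs1B k B) x y ε) (hk : k ≤ nc)
    (hgt : ∃ c < 2 * k + nc, ε < colPayoff (2 * k + nr) (scs1B k B) x c)
    (hK4 : 4 ≤ K) (hK8 : K ≤ 8) {i : ℕ}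
    (hA : ∀ j < k, A i j = 0 ∨ A i j = 1 ∨ A i j = 2 ∨ A i j = K) :
    |∑ j ∈ range nc, A i j * scs1Y k ε y j - rowPayoff (2 * k + nc) (scs1A k K A) y (2 * k + i)|
      ≤ k * (31 * ε) := by
  rw [sum_mul_scs1Y hk, rowPayoff_scs1A_encoding hk, add_sub_add_right_eq_sub, ← sum_sub_distrib]
  calc _ ≤ _ := abs_sum_le_sum_abs _ _
    _ ≤ ∑ _j ∈ range k, 31 * ε := by
      refine sum_le_sum fun j hj => ?_
      have hj := mem_range.1 hj
      obtain ⟨hbal₁, hbal₂⟩ := scs1_gadget_balanced h hk hgt hj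
      rw [scs1Y, if_pos hj]
      exact abs_mul_ite_sub_encode_le hK4 hK8 (hA j hj) (h.colStrategy_nonneg _)
        (h.colStrategy_nonneg _) hbal₁ hbal₂
    _ = k * (31 * ε) := by rw [sum_const, card_range, nsmul_eq_mul]

lemma mul_sum_scs1Y_lower_bound {n : ℕ}
    (h : IsWSNE (2 * k + nr) (2 * k + nc) (scs1A k K A) (scs1B k B) x y ε)
    (hk : k ≤ nc) (hnc : nc ≤ n)
    (hgt : ∃ c < 2 * k + nc, ε < colPayoff (2 * k + nr) (scs1B k B) x c)
    (hK8 : K ≤ 8) {i : ℕ} (hi : i < nr) (hA : ∀ j < nc, A i j ≤ K) (hxi : 0 < x (2 * k + i))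
    (hεn : 240 * n ^ 2 * ε < 1) : 7 / 324 ≤ n * ∑ j ∈ range nc, scs1Y k ε y j := by
  have hn : (1 : ℝ) ≤ n := by
    obtain ⟨c, hc, -⟩ := hgt
    exact_mod_cast (show 1 ≤ n by omega)
  have hkn : (k : ℝ) ≤ n := by exact_mod_cast hk.trans hnc
  have hε := h.eps_nonneg
  set Y := ∑ j ∈ range nc, scs1Y k ε y j
  have hYM : (1 + 8 * k) * scs1Mass k nc y ≤ 9 * n * (3 * Y + n * (11 * ε)) :=
    calc (1 + 8 * k) * scs1Mass k nc y ≤ (1 + 8 * k) * (3 * Y + k * (11 * ε)) := by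
          gcongr; exact scs1Mass_le h hk hgt
      _ ≤ 9 * n * (3 * Y + n * (11 * ε)) := by
          have hY : 0 ≤ Y := sum_nonneg fun j _ => scs1Y_nonneg h.colStrategy_nonneg j
          gcongr
          linarith
  have hkε : k * ε ≤ n * ε := mul_le_mul_of_nonneg_right hkn hε
  have hnε : n * ε ≤ n ^ 2 * ε := by
    rw [sq, mul_assoc]
    exact le_mul_of_one_le_left (by positivity) hn
  linarith [one_le_scs1Mass h hk hK8 hi hA hxi]

lemma abs_sub_sum_mul_scs1Y_le {n : ℕ}
    (h : IsWSNE (2 * k + nr) (2 * k + nc) (scs1A k K A) (scs1B k B) x y ε)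
    (hk : k ≤ nc) (hnc : nc ≤ n)
    (hgt : ∃ c < 2 * k + nc, ε < colPayoff (2 * k + nr) (scs1B k B) x c)
    (hK4 : 4 ≤ K) (hK8 : K ≤ 8) {i i' : ℕ} (hi : i < nr) (hi' : i' < nr)
    (hA : ∀ j < k, A i j = 0 ∨ A i j = 1 ∨ A i j = 2 ∨ A i j = K)
    (hA' : ∀ j < k, A i' j = 0 ∨ A i' j = 1 ∨ A i' j = 2 ∨ A i' j = K)
    (hxi : 0 < x (2 * k + i)) (hxi' : 0 < x (2 * k + i')) :
    |∑ j ∈ range nc, A i j * scs1Y k ε y j - ∑ j ∈ range nc, A i' j * scs1Y k ε y j|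
      ≤ 63 * n * ε := by
  have hn : (1 : ℝ) ≤ n := by
    obtain ⟨c, hc, -⟩ := hgt
    exact_mod_cast (show 1 ≤ n by omega)
  have hkn : (k : ℝ) ≤ n := by exact_mod_cast hk.trans hnc
  have hε := h.eps_nonneg
  have happrox := abs_sum_mul_scs1Y_sub_rowPayoff_le h hk hgt hK4 hK8 hA
  have happrox' := abs_sum_mul_scs1Y_sub_rowPayoff_le h hk hgt hK4 hK8 hA'
  have hclose := h.abs_rowPayoff_sub_le (by omega) hxi (by omega) hxi'
  rw [abs_le] at *
  constructor <;> nlinarith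

end Equilibrium

theorem stmt13_general (n nr nc k : ℕ) (K ε : ℝ) (A B : ℕ → ℕ → ℝ) (xstar ystar : ℕ → ℝ)
    (hK4 : 4 ≤ K) (hK8 : K ≤ 8)
    (hin : Scs1Input n nr nc k K A B)
    (hε : ε < 1 / (240 * (n:ℝ)^2))
    (hwsne : IsWSNE (2*k+nr) (2*k+nc) (scs1A k K A) (scs1B k B) xstar ystar ε)
    (hyval : 0 < ∑ j ∈ range nc, scs1Y k ε ystar j) :
    ∀ i < nr, ∀ i' < nr,
      0 < xstar (2*k+i) / ∑ i'' ∈ range nr, xstar (2*k+i'') →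
      0 < xstar (2*k+i') / ∑ i'' ∈ range nr, xstar (2*k+i'') →
      |(∑ j ∈ range nc, A i j * (scs1Y k ε ystar j / ∑ j' ∈ range nc, scs1Y k ε ystar j')) -
       (∑ j ∈ range nc, A i' j * (scs1Y k ε ystar j / ∑ j' ∈ range nc, scs1Y k ε ystar j'))| ≤
        3950 * (n:ℝ)^2 * ε := by
  intro i hi i' hi' hxi hxi'
  obtain ⟨-, hnc, hk, hA, hB, -, -, hBrow, -, hKcol, -⟩ := hin
  have hε0 := hwsne.eps_nonneg
  have hεn : 240 * n ^ 2 * ε < 1 := by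
    rcases n.eq_zero_or_pos with rfl | hn
    · simp
    · rwa [lt_div_iff₀ (by positivity), mul_comm] at hε
  have hgt := hwsne.exists_lt_colPayoff (scs1B_nonneg (fun i hi j hj => (hB i hi j hj).1) hk)
    (scs1B_exists_one_le hBrow hk) <| by
      have : 2 * k + nc ≤ 240 * n ^ 2 := by nlinarith
      calc ((2 * k + nc : ℕ) : ℝ) * ε ≤ (240 * n ^ 2 : ℕ) * ε := by gcongr
        _ < 1 := by push_cast; exact hεn
  have hxi₀ : 0 < xstar (2 * k + i) := (hwsne.rowStrategy_nonneg _).lt_of_ne' fun h0 => by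
    simp [h0] at hxi
  have hxi'₀ : 0 < xstar (2 * k + i') := (hwsne.rowStrategy_nonneg _).lt_of_ne' fun h0 => by
    simp [h0] at hxi'
  have hnY := mul_sum_scs1Y_lower_bound hwsne hk hnc hgt hK8 hi (fun j hj => (hA i hi j hj).2) hxi₀
    hεn
  have hΔ := abs_sub_sum_mul_scs1Y_le hwsne hk hnc hgt hK4 hK8 hi hi'
    (fun j hj => (hKcol j hj).2.1 i hi) (fun j hj => (hKcol j hj).2.1 i' hi') hxi₀ hxi'₀
  simp_rw [← mul_div_assoc]
  rw [← sum_div, ← sum_div, ← sub_div, abs_div, abs_of_pos hyval, div_le_iff₀ hyval]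
  nlinarith [mul_le_mul_of_nonneg_left hnY (by positivity : (0 : ℝ) ≤ n * ε)]

/-- If `4 ≤ K ≤ 8`, `0 ≤ ε < 1/(240 n²)`, `(x*, y*)` is an `ε`-WSNE of `(A', B')`
and the renormalizations defining the translated profile `(x, y)` are valid, then
`|(A·y)_i − (A·y)_{i'}| ≤ 3950·n²·ε` for all rows `i, i'` of `A` with `x_i > 0`
and `x_{i'} > 0`. -/
theorem stmt13 (n nr nc k : ℕ) (K ε : ℝ) (A B : ℕ → ℕ → ℝ) (xstar ystar : ℕ → ℝ)
    (hK4 : 4 ≤ K) (hK8 : K ≤ 8)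
    (hin : Scs1Input n nr nc k K A B)
    (hε0 : 0 ≤ ε) (hε : ε < 1 / (240 * (n:ℝ)^2))
    (hwsne : IsWSNE (2*k+nr) (2*k+nc) (scs1A k K A) (scs1B k B) xstar ystar ε)
    (hxval : 0 < ∑ i ∈ range nr, xstar (2*k+i))
    (hyval : 0 < ∑ j ∈ range nc, scs1Y k ε ystar j) :
    ∀ i < nr, ∀ i' < nr,
      0 < xstar (2*k+i) / ∑ i'' ∈ range nr, xstar (2*k+i'') →
      0 < xstar (2*k+i') / ∑ i'' ∈ range nr, xstar (2*k+i'') →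
      |(∑ j ∈ range nc, A i j * (scs1Y k ε ystar j / ∑ j' ∈ range nc, scs1Y k ε ystar j')) -
       (∑ j ∈ range nc, A i' j * (scs1Y k ε ystar j / ∑ j' ∈ range nc, scs1Y k ε ystar j'))| ≤
        3950 * (n:ℝ)^2 * ε :=
  stmt13_general n nr nc k K ε A B xstar ystar hK4 hK8 hin hε hwsne hyval
end

section
/- Let (A,B) be a stage 1 game (satisfying the input assumptions of the type-one single column simulation), and let (A′,B′) be produced by the type-one single column simulation with K = 4. Then A′ satisfies the column and row requirements of a stage 2 game: every column of A′ contains at most four non-zero entries, all in {1,2}, with at most one 2; every row of A′ contains either at most three entries 1, or a single entry 2 together with at most one entry 1, or exactly two entries 2 (all other entries 0); and whenever a row of A′ contains exactly two entries 2, each of those 2s shares its column with exactly one entry 1. -/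
open Finset
open scoped Classical

/-- The column requirement of a stage 1 game. -/
def Stage1Col (nr : ℕ) (col : ℕ → ℝ) : Prop :=
  ((∀ i < nr, col i ∈ ({0, 1, 2} : Set ℝ)) ∧
    ((range nr).filter fun i => col i ≠ 0).card ≤ 3 ∧
    ((range nr).filter fun i => col i = 2).card ≤ 1) ∨
  ((((range nr).filter fun i => col i = 4).card = 1) ∧
    ((range nr).filter fun i => col i = 1).card ≤ 3 ∧
    ∀ i < nr, col i ∈ ({0, 1, 4} : Set ℝ))

/-- The row requirement of a stage 1 game. -/
def Stage1Row (nc : ℕ) (row : ℕ → ℝ) : Prop :=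
  ((∀ j < nc, row j = 0 ∨ row j = 1) ∧
    ((range nc).filter fun j => row j = 1).card ≤ 3) ∨
  ((((range nc).filter fun j => row j = 2).card = 1) ∧
    ((range nc).filter fun j => row j = 1).card ≤ 1 ∧
    ∀ j < nc, row j ∈ ({0, 1, 2} : Set ℝ)) ∨
  ((((range nc).filter fun j => row j = 4).card = 2) ∧
    ∀ j < nc, row j ∈ ({0, 4} : Set ℝ))

/-- `(A, B)` (with `nr` rows and `nc` columns) is a stage 1 game: every column of
`A` and of `Bᵀ` satisfies the stage 1 column requirement and every row of `A` and
of `Bᵀ` satisfies the stage 1 row requirement. -/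
def Stage1Game (nr nc : ℕ) (A B : ℕ → ℕ → ℝ) : Prop :=
  (∀ j < nc, Stage1Col nr (fun i => A i j)) ∧
  (∀ i < nr, Stage1Row nc (fun j => A i j)) ∧
  (∀ i < nr, Stage1Col nc (fun j => B i j)) ∧
  (∀ j < nc, Stage1Row nr (fun i => B i j))

/-- The column requirement of a stage 2 game: at most four non-zero entries, all in
`{1,2}`, with at most one `2`. -/
def Stage2Col (nr : ℕ) (col : ℕ → ℝ) : Prop :=
  (∀ i < nr, col i ∈ ({0, 1, 2} : Set ℝ)) ∧
  ((range nr).filter fun i => col i ≠ 0).card ≤ 4 ∧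
  ((range nr).filter fun i => col i = 2).card ≤ 1

/-- The row requirement of a stage 2 game: either (i) at most three entries `1`,
or (ii) a single `2` with at most one `1`, or (iii) exactly two entries `2` (all
remaining entries are `0`). -/
def Stage2Row (nc : ℕ) (row : ℕ → ℝ) : Prop :=
  ((∀ j < nc, row j = 0 ∨ row j = 1) ∧
    ((range nc).filter fun j => row j = 1).card ≤ 3) ∨
  ((((range nc).filter fun j => row j = 2).card = 1) ∧
    ((range nc).filter fun j => row j = 1).card ≤ 1 ∧
    ∀ j < nc, row j ∈ ({0, 1, 2} : Set ℝ)) ∨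
  ((((range nc).filter fun j => row j = 2).card = 2) ∧
    ∀ j < nc, row j ∈ ({0, 2} : Set ℝ))

/-!
Up to an injective relocation of entries and zero padding, every row and every column of `A'`
is either a row or column of the gadget `[[2,0,1],[0,1,1]]` (the blocks `S` and `1`), or a row or
column of `A` with each `4` replaced by `2`. For column `3j` this pairs the gadget's `2` with the
`4` of `A_j`; everywhere else it is read off the definition, using that in a stage 1 game a
column containing a `4` contains no `2`, so that its encoding loses nothing. Relocation preserves
the number of entries of every nonzero value, and replacing `4` by `2` turns stage 1 rows and
columns into stage 2 ones. Finally, a row of `A` containing a `2` contains only one, so a row of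
`A'` with two `2`s comes from a row of `A` with two `4`s; each of its `2`s then lies in a column
`3j+1`, whose only `1` is in the gadget.
-/

structure ExtendsByZero (n m : ℕ) (f : ℕ → ℕ) (u v : ℕ → ℝ) : Prop where
  apply_lt : ∀ j < n, f j < m
  injOn : ∀ j < n, ∀ j' < n, f j = f j' → j = j'
  apply_eq : ∀ j < n, v (f j) = u j
  exists_eq_of_ne_zero : ∀ c < m, v c ≠ 0 → ∃ j < n, f j = c

namespace ExtendsByZero

variable {n m : ℕ} {f : ℕ → ℕ} {u v : ℕ → ℝ}

theorem of_eqOn (h : ∀ j < n, v j = u j) :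
    ExtendsByZero n n id u v :=
  ⟨fun _ hj => hj, fun _ _ _ _ hjj' => hjj', h, fun c hc _ => ⟨c, hc, rfl⟩⟩

theorem filter_eq_image (h : ExtendsByZero n m f u v) {p : ℝ → Prop} [DecidablePred p]
    (hp : ¬ p 0) :
    (range m).filter (fun c => p (v c)) = ((range n).filter fun j => p (u j)).image f := by
  ext c
  simp only [mem_filter, mem_range, mem_image]
  constructor
  · rintro ⟨hc, hpc⟩
    obtain ⟨j, hj, rfl⟩ := h.exists_eq_of_ne_zero c hc (fun h0 => hp (h0 ▸ hpc))
    exact ⟨j, ⟨hj, h.apply_eq j hj ▸ hpc⟩, rfl⟩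
  · rintro ⟨j, ⟨hj, hpj⟩, rfl⟩
    exact ⟨h.apply_lt j hj, (h.apply_eq j hj).symm ▸ hpj⟩

theorem card_filter (h : ExtendsByZero n m f u v) {p : ℝ → Prop} [DecidablePred p]
    (hp : ¬ p 0) :
    #((range m).filter fun c => p (v c)) = #((range n).filter fun j => p (u j)) := by
  rw [h.filter_eq_image hp, card_image_of_injOn]
  intro j hj j' hj'
  exact h.injOn j (mem_range.1 (mem_filter.1 hj).1) j' (mem_range.1 (mem_filter.1 hj').1)

theorem mem {S : Set ℝ} (h : ExtendsByZero n m f u v) (h0 : 0 ∈ S) (hu : ∀ j < n, u j ∈ S) :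
    ∀ c < m, v c ∈ S := by
  intro c hc
  by_cases hvc : v c = 0
  · exact hvc ▸ h0
  · obtain ⟨j, hj, rfl⟩ := h.exists_eq_of_ne_zero c hc hvc
    exact h.apply_eq j hj ▸ hu j hj

theorem stage2Col (h : ExtendsByZero n m f u v) (hu : Stage2Col n u) : Stage2Col m v := by
  obtain ⟨hmem, hnz, htwo⟩ := hu
  exact ⟨h.mem (by simp) hmem, h.card_filter (p := (· ≠ 0)) (by simp) ▸ hnz,
    h.card_filter (p := (· = 2)) (by norm_num) ▸ htwo⟩

theorem stage2Row (h : ExtendsByZero n m f u v) (hu : Stage2Row n u) : Stage2Row m v := by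
  have hone := h.card_filter (p := (· = 1)) (by norm_num)
  have htwo := h.card_filter (p := (· = 2)) (by norm_num)
  rcases hu with ⟨hmem, h1⟩ | ⟨h2, h1, hmem⟩ | ⟨h2, hmem⟩
  · exact Or.inl ⟨h.mem (S := {x | x = 0 ∨ x = 1}) (by simp) hmem, hone ▸ h1⟩
  · exact Or.inr (Or.inl ⟨htwo ▸ h2, hone ▸ h1, h.mem (by simp) hmem⟩)
  · exact Or.inr (Or.inr ⟨htwo ▸ h2, h.mem (by simp) hmem⟩)

end ExtendsByZero

noncomputable def halveFour (x : ℝ) : ℝ := if x = 4 then 2 else x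

section halveFour

variable {x : ℝ}

theorem halveFour_of_ne (h : x ≠ 4) : halveFour x = x := if_neg h

theorem halveFour_eq_two : halveFour x = 2 ↔ x = 2 ∨ x = 4 := by
  unfold halveFour; split_ifs with h <;> simp [h]

theorem halveFour_eq_zero : halveFour x = 0 ↔ x = 0 := by
  unfold halveFour; split_ifs with h <;> simp [h]

end halveFour

section Stage1

variable {n : ℕ} {col row : ℕ → ℝ}

theorem Stage1Col.mem_of_eq_four (h : Stage1Col n col) {i : ℕ} (hi : i < n) (h4 : col i = 4) :
    ∀ i' < n, col i' = 0 ∨ col i' = 1 ∨ col i' = 4 := by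
  rcases h with ⟨hmem, -, -⟩ | ⟨-, -, hmem⟩
  · obtain h | h | h : col i = 0 ∨ col i = 1 ∨ col i = 2 := hmem i hi <;>
      norm_num [h] at h4
  · exact hmem

theorem Stage1Col.eq_four_iff (h : Stage1Col n col) {i₀ : ℕ} (hi₀ : i₀ < n) (h4 : col i₀ = 4) :
    ∀ i < n, col i = 4 ↔ i = i₀ := by
  rcases h with ⟨hmem, -, -⟩ | ⟨hfour, -, -⟩
  · obtain h | h | h : col i₀ = 0 ∨ col i₀ = 1 ∨ col i₀ = 2 := hmem i₀ hi₀ <;>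
      norm_num [h] at h4
  · obtain ⟨a, ha⟩ := card_eq_one.1 hfour
    have hmem : ∀ i < n, col i = 4 → i = a := fun i hi h4 =>
      mem_singleton.1 (ha ▸ mem_filter.2 ⟨mem_range.2 hi, h4⟩)
    exact fun i hi => ⟨fun h => (hmem i hi h).trans (hmem i₀ hi₀ h4).symm, fun h => h ▸ h4⟩

theorem Stage1Col.stage2Col_halveFour (h : Stage1Col n col) :
    Stage2Col n (fun i => halveFour (col i)) := by
  rcases h with ⟨hmem, hnz, htwo⟩ | ⟨hfour, hone, hmem⟩
  · refine (ExtendsByZero.of_eqOn fun i hi => ?_).stage2Col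
      ⟨hmem, hnz.trans (by norm_num), htwo⟩
    obtain h | h | h : col i = 0 ∨ col i = 1 ∨ col i = 2 := hmem i hi <;>
      norm_num [halveFour, h]
  · have hmem' : ∀ i < n, col i = 0 ∨ col i = 1 ∨ col i = 4 := hmem
    refine ⟨fun i hi => ?_, ?_, ?_⟩
    · rcases hmem' i hi with h | h | h <;> norm_num [halveFour, h]
    · calc #((range n).filter fun i => halveFour (col i) ≠ 0)
          ≤ #(((range n).filter fun i => col i = 1) ∪
              (range n).filter fun i => col i = 4) := by
            refine card_le_card fun i => ?_
            simp only [mem_filter, mem_union, mem_range, halveFour_eq_zero.not]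
            rintro ⟨hi, hne⟩
            rcases hmem' i hi with h | h | h <;> simp_all
        _ ≤ 4 := (card_union_le _ _).trans (by omega)
    · calc #((range n).filter fun i => halveFour (col i) = 2)
          = #((range n).filter fun i => col i = 4) := by
            refine congrArg card (filter_congr fun i hi => ?_)
            rw [halveFour_eq_two]
            rcases hmem' i (mem_range.1 hi) with h | h | h <;> norm_num [h]
        _ ≤ 1 := hfour.le

theorem Stage1Row.stage2Row_halveFour (h : Stage1Row n row) :
    Stage2Row n (fun j => halveFour (row j)) := by
  rcases h with ⟨hmem, hone⟩ | ⟨htwo, hone, hmem⟩ | ⟨hfour, hmem⟩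
  · refine (ExtendsByZero.of_eqOn fun j hj => ?_).stage2Row (Or.inl ⟨hmem, hone⟩)
    rcases hmem j hj with h | h <;> norm_num [halveFour, h]
  · refine (ExtendsByZero.of_eqOn fun j hj => ?_).stage2Row
      (Or.inr (Or.inl ⟨htwo, hone, hmem⟩))
    obtain h | h | h : row j = 0 ∨ row j = 1 ∨ row j = 2 := hmem j hj <;>
      norm_num [halveFour, h]
  · have hmem' : ∀ j < n, row j = 0 ∨ row j = 4 := hmem
    refine Or.inr (Or.inr ⟨?_, fun j hj => ?_⟩)
    · refine (congrArg card (filter_congr fun j hj => ?_)).trans hfour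
      rw [halveFour_eq_two]
      rcases hmem' j (mem_range.1 hj) with h | h <;> norm_num [h]
    · rcases hmem' j hj with h | h <;> norm_num [halveFour, h]

theorem Stage1Row.card_halveFour_eq_two_of_eq_two (h : Stage1Row n row) {j : ℕ} (hj : j < n)
    (h2 : row j = 2) : #((range n).filter fun j => halveFour (row j) = 2) = 1 := by
  rcases h with ⟨hmem, -⟩ | ⟨htwo, -, hmem⟩ | ⟨-, hmem⟩
  · rcases hmem j hj with h | h <;> norm_num [h] at h2
  · refine (congrArg card (filter_congr fun j hj => ?_)).trans htwo
    rw [halveFour_eq_two]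
    obtain h | h | h : row j = 0 ∨ row j = 1 ∨ row j = 2 := hmem j (mem_range.1 hj) <;>
      norm_num [h]
  · obtain h | h : row j = 0 ∨ row j = 4 := hmem j hj <;> norm_num [h] at h2

end Stage1

section Entries

variable {k : ℕ} {K : ℝ} {A : ℕ → ℕ → ℝ} {i j c : ℕ}

theorem scs1A_two_mul (hj : j < k) (c : ℕ) :
    scs1A k K A (2*j) c = if c = 3*j then 2 else if c = 3*j+2 then 1 else 0 := by
  simp only [scs1A, show 2*j < 2*k by omega, if_true, show 2*j/2 = j by omega,
    show 2*j % 2 = 0 by omega]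
  split_ifs <;> first | rfl | omega

theorem scs1A_two_mul_add_one (hj : j < k) (c : ℕ) :
    scs1A k K A (2*j+1) c = if c = 3*j+1 ∨ c = 3*j+2 then 1 else 0 := by
  simp only [scs1A, show 2*j+1 < 2*k by omega, if_true, show (2*j+1)/2 = j by omega,
    show (2*j+1) % 2 = 1 by omega, one_ne_zero, if_false]
  split_ifs <;> first | rfl | omega

theorem scs1A_of_lt_of_le {r : ℕ} (hr : r < 2*k) (hc : 3*k ≤ c) : scs1A k K A r c = 0 := by
  simp only [scs1A, if_pos hr]
  split_ifs <;> first | rfl | omega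

theorem scs1A_encoding_three_mul (hj : j < k) :
    scs1A k K A (2*k+i) (3*j) = if A i j = 1 then 1 else 0 := by
  simp only [scs1A, show ¬ 2*k+i < 2*k by omega, show 3*j < 3*k by omega, if_true, if_false,
    show 3*j % 3 = 0 by omega, show 3*j/3 = j by omega, Nat.add_sub_cancel_left]

theorem scs1A_encoding_three_mul_add_one (hj : j < k) :
    scs1A k K A (2*k+i) (3*j+1) = if A i j = K then K/2 else if A i j = 2 then 1 else 0 := by
  simp only [scs1A, show ¬ 2*k+i < 2*k by omega, show 3*j+1 < 3*k by omega, if_true, if_false,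
    show (3*j+1) % 3 = 1 by omega, show (3*j+1)/3 = j by omega, Nat.add_sub_cancel_left]
  rfl

theorem scs1A_encoding_three_mul_add_two (hj : j < k) : scs1A k K A (2*k+i) (3*j+2) = 0 := by
  simp only [scs1A, show ¬ 2*k+i < 2*k by omega, show 3*j+2 < 3*k by omega, if_true, if_false,
    show (3*j+2) % 3 = 2 by omega]
  rfl

theorem scs1A_encoding_of_le (hc : 3*k ≤ c) : scs1A k K A (2*k+i) c = A i (c - 2*k) := by
  simp only [scs1A, show ¬ 2*k+i < 2*k by omega, show ¬ c < 3*k by omega, if_false,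
    Nat.add_sub_cancel_left]

end Entries

theorem exists_eq_two_mul_or_exists_eq_add (k r : ℕ) :
    (∃ j < k, r = 2*j ∨ r = 2*j+1) ∨ ∃ i, r = 2*k+i := by
  rcases lt_or_ge r (2*k) with hr | hr
  · exact Or.inl ⟨r/2, by omega, by omega⟩
  · exact Or.inr ⟨r - 2*k, by omega⟩

theorem exists_eq_three_mul_or_of_lt {k c : ℕ} (hc : c < 3*k) :
    ∃ j < k, c = 3*j ∨ c = 3*j+1 ∨ c = 3*j+2 :=
  ⟨c/3, by omega, by omega⟩

section Simulation

variable {k nr nc : ℕ} {K : ℝ} {A : ℕ → ℕ → ℝ}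

theorem extendsByZero_scs1A_col_three_mul {j i₀ : ℕ} (hj : j < k)
    (hcol : Stage1Col nr fun i => A i j) (hi₀ : i₀ < nr) (h4 : A i₀ j = 4) :
    ExtendsByZero nr (2*k+nr) (fun i => if i = i₀ then 2*j else 2*k+i)
      (fun i => halveFour (A i j)) (fun r => scs1A k 4 A r (3*j)) where
  apply_lt i hi := by split_ifs <;> omega
  injOn i _ i' _ := by split_ifs <;> omega
  apply_eq i hi := by
    split_ifs with h
    · rw [scs1A_two_mul hj, if_pos rfl, (hcol.eq_four_iff hi₀ h4 i hi).2 h]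
      norm_num [halveFour]
    · rw [scs1A_encoding_three_mul hj]
      rcases hcol.mem_of_eq_four hi₀ h4 i hi with h' | h' | h' <;> norm_num [halveFour, h']
      exact h ((hcol.eq_four_iff hi₀ h4 i hi).1 h')
  exists_eq_of_ne_zero r hr hne := by
    rcases exists_eq_two_mul_or_exists_eq_add k r with ⟨j', hj', rfl | rfl⟩ | ⟨i, rfl⟩
    · rw [scs1A_two_mul hj'] at hne
      have hj'j : j' = j := by split_ifs at hne <;> first | omega | exact absurd rfl hne
      exact ⟨i₀, hi₀, by simp [hj'j]⟩
    · rw [scs1A_two_mul_add_one hj', if_neg (by omega)] at hne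
      exact absurd rfl hne
    · rw [scs1A_encoding_three_mul hj] at hne
      have h1 : A i j = 1 := by by_contra h; simp [h] at hne
      refine ⟨i, by omega, ?_⟩
      rw [if_neg fun h => by norm_num [(hcol.eq_four_iff hi₀ h4 i (by omega)).2 h] at h1]

theorem extendsByZero_scs1A_col_three_mul_add_one {j i₀ : ℕ} (hj : j < k)
    (hcol : Stage1Col nr fun i => A i j) (hi₀ : i₀ < nr) (h4 : A i₀ j = 4) :
    ExtendsByZero 2 (2*k+nr) (fun t => if t = 0 then 2*j+1 else 2*k+i₀)
      (fun t => if t = 0 then 1 else 2) (fun r => scs1A k 4 A r (3*j+1)) where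
  apply_lt t _ := by split_ifs <;> omega
  injOn t ht t' ht' := by split_ifs <;> omega
  apply_eq t _ := by
    split_ifs
    · rw [scs1A_two_mul_add_one hj, if_pos (Or.inl rfl)]
    · rw [scs1A_encoding_three_mul_add_one hj, if_pos h4]
      norm_num
  exists_eq_of_ne_zero r hr hne := by
    rcases exists_eq_two_mul_or_exists_eq_add k r with ⟨j', hj', rfl | rfl⟩ | ⟨i, rfl⟩
    · rw [scs1A_two_mul hj', if_neg (by omega), if_neg (by omega)] at hne
      exact absurd rfl hne
    · rw [scs1A_two_mul_add_one hj'] at hne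
      have hj'j : j' = j := by split_ifs at hne <;> first | omega | exact absurd rfl hne
      exact ⟨0, by omega, by simp [hj'j]⟩
    · rw [scs1A_encoding_three_mul_add_one hj] at hne
      have hi4 : A i j = 4 := by
        rcases hcol.mem_of_eq_four hi₀ h4 i (by omega) with h | h | h <;>
          first | exact h | norm_num [h] at hne
      exact ⟨1, by omega, by simp [(hcol.eq_four_iff hi₀ h4 i (by omega)).1 hi4]⟩

theorem extendsByZero_scs1A_col_three_mul_add_two {j : ℕ} (hj : j < k) :
    ExtendsByZero 2 (2*k+nr) (2*j + ·) (fun _ => 1) (fun r => scs1A k 4 A r (3*j+2)) where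
  apply_lt t _ := by omega
  injOn t _ t' _ := by omega
  apply_eq t ht := by
    obtain rfl | rfl : t = 0 ∨ t = 1 := by omega
    · rw [add_zero, scs1A_two_mul hj, if_neg (by omega), if_pos rfl]
    · rw [scs1A_two_mul_add_one hj, if_pos (Or.inr rfl)]
  exists_eq_of_ne_zero r hr hne := by
    rcases exists_eq_two_mul_or_exists_eq_add k r with ⟨j', hj', rfl | rfl⟩ | ⟨i, rfl⟩
    · rw [scs1A_two_mul hj'] at hne
      exact ⟨0, by omega, by split_ifs at hne <;> first | omega | simp at hne⟩
    · rw [scs1A_two_mul_add_one hj'] at hne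
      exact ⟨1, by omega, by split_ifs at hne <;> first | omega | simp at hne⟩
    · exact absurd (scs1A_encoding_three_mul_add_two hj) hne

theorem extendsByZero_scs1A_col_of_le {c : ℕ} (hc : 3*k ≤ c)
    (hno4 : ∀ i < nr, A i (c - 2*k) ≠ 4) :
    ExtendsByZero nr (2*k+nr) (2*k + ·) (fun i => halveFour (A i (c - 2*k)))
      (fun r => scs1A k 4 A r c) where
  apply_lt i hi := by omega
  injOn i _ i' _ := by omega
  apply_eq i hi := by rw [scs1A_encoding_of_le hc, halveFour_of_ne (hno4 i hi)]
  exists_eq_of_ne_zero r hr hne := by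
    rcases lt_or_ge r (2*k) with h | h
    · exact absurd (scs1A_of_lt_of_le h hc) hne
    · exact ⟨r - 2*k, by omega, by omega⟩

theorem extendsByZero_scs1A_row_two_mul {j : ℕ} (hj : j < k) (hk : k ≤ nc) :
    ExtendsByZero 3 (2*k+nc) (3*j + ·) (fun t => if t = 0 then 2 else if t = 2 then 1 else 0)
      (fun c => scs1A k K A (2*j) c) where
  apply_lt t _ := by omega
  injOn t _ t' _ := by omega
  apply_eq t _ := by
    rw [scs1A_two_mul hj]
    split_ifs <;> first | rfl | omega
  exists_eq_of_ne_zero c _ hne := by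
    rw [scs1A_two_mul hj] at hne
    split_ifs at hne with h h'
    · exact ⟨0, by omega, h.symm⟩
    · exact ⟨2, by omega, h'.symm⟩
    · exact absurd rfl hne

theorem extendsByZero_scs1A_row_two_mul_add_one {j : ℕ} (hj : j < k) (hk : k ≤ nc) :
    ExtendsByZero 3 (2*k+nc) (3*j + ·) (fun t => if t = 0 then 0 else 1)
      (fun c => scs1A k K A (2*j+1) c) where
  apply_lt t _ := by omega
  injOn t _ t' _ := by omega
  apply_eq t _ := by
    rw [scs1A_two_mul_add_one hj]
    split_ifs <;> first | rfl | omega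
  exists_eq_of_ne_zero c _ hne := by
    rw [scs1A_two_mul_add_one hj] at hne
    split_ifs at hne with h
    · exact ⟨c - 3*j, by omega, by omega⟩
    · exact absurd rfl hne

theorem extendsByZero_scs1A_row_encoding {i : ℕ} (hk : k ≤ nc)
    (hmem : ∀ j < k, A i j = 0 ∨ A i j = 1 ∨ A i j = 4)
    (hno4 : ∀ j, k ≤ j → j < nc → A i j ≠ 4) :
    ExtendsByZero nc (2*k+nc) (fun j => if j < k then (if A i j = 1 then 3*j else 3*j+1) else 2*k+j)
      (fun j => halveFour (A i j)) (fun c => scs1A k 4 A (2*k+i) c) where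
  apply_lt j hj := by split_ifs <;> omega
  injOn j _ j' _ := by split_ifs <;> omega
  apply_eq j hj := by
    split_ifs with hjk h1
    · rw [scs1A_encoding_three_mul hjk, if_pos h1, h1, halveFour_of_ne (by norm_num)]
    · rw [scs1A_encoding_three_mul_add_one hjk]
      rcases hmem j hjk with h | h | h <;> first | exact absurd h h1 | norm_num [halveFour, h]
    · rw [scs1A_encoding_of_le (by omega), Nat.add_sub_cancel_left,
        halveFour_of_ne (hno4 j (by omega) hj)]
  exists_eq_of_ne_zero c hc hne := by
    rcases lt_or_ge c (3*k) with h | h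
    · obtain ⟨j, hj, rfl | rfl | rfl⟩ := exists_eq_three_mul_or_of_lt h
      · rw [scs1A_encoding_three_mul hj] at hne
        refine ⟨j, by omega, ?_⟩
        split_ifs at hne with h1
        · simp [hj, h1]
        · exact absurd rfl hne
      · rw [scs1A_encoding_three_mul_add_one hj] at hne
        have h1 : A i j ≠ 1 := fun h1 => by norm_num [h1] at hne
        exact ⟨j, by omega, by simp [hj, h1]⟩
      · exact absurd (scs1A_encoding_three_mul_add_two hj) hne
    · exact ⟨c - 2*k, by omega, by simp only [show ¬ c - 2*k < k by omega, if_false]; omega⟩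

theorem mem_of_lt_of_exists_four (hk : k ≤ nc) (hcol : ∀ j < nc, Stage1Col nr fun i => A i j)
    (hfour : ∀ j < k, ∃ i₀ < nr, A i₀ j = 4) {i : ℕ} (hi : i < nr) :
    ∀ j < k, A i j = 0 ∨ A i j = 1 ∨ A i j = 4 := fun j hj => by
  obtain ⟨i₀, hi₀, h4⟩ := hfour j hj
  exact (hcol j (by omega)).mem_of_eq_four hi₀ h4 i hi

theorem stage2Col_scs1A (hk : k ≤ nc) (hcol : ∀ j < nc, Stage1Col nr fun i => A i j)
    (hfour : ∀ j < k, ∃ i₀ < nr, A i₀ j = 4)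
    (hno4 : ∀ j, k ≤ j → j < nc → ∀ i < nr, A i j ≠ 4) {c : ℕ} (hc : c < 2*k+nc) :
    Stage2Col (2*k+nr) fun r => scs1A k 4 A r c := by
  rcases lt_or_ge c (3*k) with h | h
  · obtain ⟨j, hj, hcj⟩ := exists_eq_three_mul_or_of_lt h
    obtain ⟨i₀, hi₀, h4⟩ := hfour j hj
    rcases hcj with rfl | rfl | rfl
    · exact (extendsByZero_scs1A_col_three_mul hj (hcol j (by omega)) hi₀ h4).stage2Col
        (hcol j (by omega)).stage2Col_halveFour
    · refine (extendsByZero_scs1A_col_three_mul_add_one hj (hcol j (by omega)) hi₀ h4).stage2Col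
        ⟨fun t _ => by dsimp only; split_ifs <;> simp, (card_filter_le _ _).trans (by simp), ?_⟩
      simp [range_add_one, filter_insert]
    · exact (extendsByZero_scs1A_col_three_mul_add_two hj).stage2Col
        ⟨fun t _ => by simp, (card_filter_le _ _).trans (by simp), by simp⟩
  · exact (extendsByZero_scs1A_col_of_le h fun i hi => hno4 _ (by omega) (by omega) i hi).stage2Col
      (hcol _ (by omega)).stage2Col_halveFour

theorem stage2Row_scs1A (hk : k ≤ nc) (hcol : ∀ j < nc, Stage1Col nr fun i => A i j)
    (hrow : ∀ i < nr, Stage1Row nc fun j => A i j)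
    (hfour : ∀ j < k, ∃ i₀ < nr, A i₀ j = 4)
    (hno4 : ∀ j, k ≤ j → j < nc → ∀ i < nr, A i j ≠ 4) {r : ℕ} (hr : r < 2*k+nr) :
    Stage2Row (2*k+nc) fun c => scs1A k 4 A r c := by
  rcases exists_eq_two_mul_or_exists_eq_add k r with ⟨j, hj, rfl | rfl⟩ | ⟨i, rfl⟩
  · refine (extendsByZero_scs1A_row_two_mul hj hk).stage2Row
      (Or.inr (Or.inl ⟨?_, ?_, fun t _ => ?_⟩))
    · simp [range_add_one, filter_insert, filter_singleton]
    · simp [range_add_one, filter_insert]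
    · dsimp only; split_ifs <;> simp
  · exact (extendsByZero_scs1A_row_two_mul_add_one hj hk).stage2Row
      (Or.inl ⟨fun t _ => by dsimp only; split_ifs <;> simp,
        (card_filter_le _ _).trans (by simp)⟩)
  · have hi : i < nr := by omega
    exact (extendsByZero_scs1A_row_encoding hk (mem_of_lt_of_exists_four hk hcol hfour hi)
      fun j hkj hj => hno4 j hkj hj i hi).stage2Row (hrow i hi).stage2Row_halveFour

theorem exists_eq_three_mul_add_one_of_card_eq_two (hk : k ≤ nc)
    (hcol : ∀ j < nc, Stage1Col nr fun i => A i j) (hrow : ∀ i < nr, Stage1Row nc fun j => A i j)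
    (hfour : ∀ j < k, ∃ i₀ < nr, A i₀ j = 4)
    (hno4 : ∀ j, k ≤ j → j < nc → ∀ i < nr, A i j ≠ 4) {r c : ℕ} (hr : r < 2*k+nr)
    (htwo : #((range (2*k+nc)).filter fun c => scs1A k 4 A r c = 2) = 2) (hc : c < 2*k+nc)
    (hrc : scs1A k 4 A r c = 2) : ∃ j < k, c = 3*j+1 := by
  rcases exists_eq_two_mul_or_exists_eq_add k r with ⟨j, hj, rfl | rfl⟩ | ⟨i, rfl⟩
  · rw [(extendsByZero_scs1A_row_two_mul hj hk).card_filter (p := (· = 2)) (by norm_num)] at htwo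
    simp [range_add_one, filter_insert, filter_singleton] at htwo
  · rw [(extendsByZero_scs1A_row_two_mul_add_one hj hk).card_filter (p := (· = 2)) (by norm_num)]
      at htwo
    simp [range_add_one, filter_insert, filter_singleton] at htwo
  · have hi : i < nr := by omega
    have hmem := mem_of_lt_of_exists_four hk hcol hfour hi
    have hext := extendsByZero_scs1A_row_encoding hk hmem fun j hkj hj => hno4 j hkj hj i hi
    obtain ⟨j, hj, rfl⟩ := hext.exists_eq_of_ne_zero c hc (by rw [hrc]; norm_num)
    have h2 : A i j = 2 ∨ A i j = 4 := halveFour_eq_two.1 (hext.apply_eq j hj ▸ hrc)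
    by_cases hjk : j < k
    · have h4 : A i j = 4 := by
        rcases hmem j hjk with h | h | h <;> first | exact h | norm_num [h] at h2
      exact ⟨j, hjk, by simp [hjk, h4]⟩
    · have h2 : A i j = 2 := h2.resolve_right (hno4 j (by omega) hj i hi)
      rw [hext.card_filter (p := (· = 2)) (by norm_num),
        (hrow i hi).card_halveFour_eq_two_of_eq_two hj h2] at htwo
      exact absurd htwo (by norm_num)

theorem card_filter_scs1A_three_mul_add_one_eq_one {j i₀ : ℕ} (hj : j < k)
    (hcol : Stage1Col nr fun i => A i j) (hi₀ : i₀ < nr) (h4 : A i₀ j = 4) :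
    #((range (2*k+nr)).filter fun r => scs1A k 4 A r (3*j+1) = 1) = 1 := by
  rw [(extendsByZero_scs1A_col_three_mul_add_one hj hcol hi₀ h4).card_filter (p := (· = 1))
    (by norm_num)]
  simp

end Simulation

/-- If `(A, B)` is a stage 1 game satisfying the input assumptions of the type-one
single column simulation with `K = 4`, then `A'` satisfies the column and row
requirements of a stage 2 game, and whenever a row of `A'` contains exactly two
entries `2`, each of those `2`s shares its column with exactly one entry `1`. -/
theorem stmt15 (n nr nc k : ℕ) (A B : ℕ → ℕ → ℝ)
    (hstage1 : Stage1Game nr nc A B)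
    (hin : Scs1Input n nr nc k 4 A B) :
    (∀ c < 2*k+nc, Stage2Col (2*k+nr) (fun r => scs1A k 4 A r c)) ∧
    (∀ r < 2*k+nr, Stage2Row (2*k+nc) (fun c => scs1A k 4 A r c)) ∧
    (∀ r < 2*k+nr,
      ((range (2*k+nc)).filter fun c => scs1A k 4 A r c = 2).card = 2 →
      ∀ c < 2*k+nc, scs1A k 4 A r c = 2 →
        ((range (2*k+nr)).filter fun r' => scs1A k 4 A r' c = 1).card = 1) := by
  obtain ⟨hcol, hrow, -, -⟩ := hstage1
  obtain ⟨-, -, hk, -, -, -, -, -, -, hKcol, hno4⟩ := hin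
  have hfour : ∀ j < k, ∃ i₀ < nr, A i₀ j = 4 := fun j hj => by
    obtain ⟨i₀, hi₀⟩ := card_pos.1 (by rw [(hKcol j hj).1]; norm_num)
    exact ⟨i₀, mem_range.1 (mem_filter.1 hi₀).1, (mem_filter.1 hi₀).2⟩
  refine ⟨fun c hc => stage2Col_scs1A hk hcol hfour hno4 hc,
    fun r hr => stage2Row_scs1A hk hcol hrow hfour hno4 hr, fun r hr htwo c hc hrc => ?_⟩
  obtain ⟨j, hj, rfl⟩ :=
    exists_eq_three_mul_add_one_of_card_eq_two hk hcol hrow hfour hno4 hr htwo hc hrc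
  obtain ⟨i₀, hi₀, h4⟩ := hfour j hj
  exact card_filter_scs1A_three_mul_add_one_eq_one hj (hcol j (by omega)) hi₀ h4
end
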